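/- Main correspondence theorem: for any PL-formula α and any set Γ of PL-formulas, Γ inquisitively entails α (Γ ⊩ α: for every model M and every state s ⊆ W_M, if M,s ⊩ γ for all γ ∈ Γ then M,s ⊩ α) if and only if Kh Γ ⊨ Kh α, where Kh Γ = {Kh γ : γ ∈ Γ} and ⊨ is semantic entailment over pointed epistemic models in the knowing-how semantics. -/

import Mathlib

/-- Formulas of the propositional language `PL` over atoms `P`. -/
inductive PLForm (P : Type) : Type
  | atom : P → PLForm P
  | bot  : PLForm P
  | and  : PLForm P → PLForm P → PLForm P
  | or   : PLForm P → PLForm P → PLForm P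
  | imp  : PLForm P → PLForm P → PLForm P

/-- `¬α` abbreviates `α → ⊥`. -/
def PLForm.neg {P : Type} (α : PLForm P) : PLForm P := α.imp .bot

/-- The resolution space `S(α)`, realized as a type: `S(p)` and `S(⊥)` are
singletons, `S(α∨β)` is the disjoint union, `S(α∧β)` the product, and
`S(α→β)` the full function space. -/
def RS (P : Type) : PLForm P → Type
  | .atom _  => Unit
  | .bot     => Unit
  | .or a b  => RS P a ⊕ RS P b
  | .and a b => RS P a × RS P b
  | .imp a b => RS P a → RS P b

/-- An epistemic (information) model over atoms `P` with worlds `W`: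
`W` is nonempty and `V` a valuation. -/
structure Model (P W : Type) where
  ne : Nonempty W
  V : W → Set P

/-- The actual resolutions `R(w,α) ⊆ S(α)` at a world `w`. -/
def Res {P W : Type} (M : Model P W) (w : W) : (α : PLForm P) → Set (RS P α)
  | .atom p  => {_u : Unit | p ∈ M.V w}
  | .bot     => ∅
  | .or a b  => (Sum.inl '' Res M w a) ∪ (Sum.inr '' Res M w b)
  | .and a b => (Res M w a) ×ˢ (Res M w b)
  | .imp a b => {f : RS P a → RS P b | f '' Res M w a ⊆ Res M w b}

/-- Formulas of the dynamic epistemic language `DELKh`. -/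
inductive DForm (P : Type) : Type
  | atom : P → DForm P
  | bot  : DForm P
  | and  : DForm P → DForm P → DForm P
  | or   : DForm P → DForm P → DForm P
  | imp  : DForm P → DForm P → DForm P
  | K    : DForm P → DForm P
  | box  : DForm P → DForm P
  | kh   : PLForm P → DForm P

def DForm.neg {P : Type} (φ : DForm P) : DForm P := φ.imp .bot
def DForm.dia {P : Type} (φ : DForm P) : DForm P := (DForm.box φ.neg).neg
def DForm.biImp {P : Type} (φ ψ : DForm P) : DForm P := (φ.imp ψ).and (ψ.imp φ)

/-- Embedding of `PL` into `DELKh`. -/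
def PLForm.toD {P : Type} : PLForm P → DForm P
  | .atom p  => .atom p
  | .bot     => .bot
  | .and a b => (toD a).and (toD b)
  | .or a b  => (toD a).or (toD b)
  | .imp a b => (toD a).imp (toD b)

/-- The submodel of `M` determined by a nonempty set `s` of worlds,
with the restricted valuation. -/
def Model.restrict {P W : Type} (M : Model P W) (s : Set W) (h : s.Nonempty) :
    Model P s :=
  { ne := ⟨⟨h.choose, h.choose_spec⟩⟩, V := fun w => M.V w.1 }

/-- Satisfaction of `DELKh`-formulas at a pointed model `(M,w)`. -/
def Sat (P : Type) : (W : Type) → Model P W → W → DForm P → Prop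
  | _, M, w, .atom p  => p ∈ M.V w
  | _, _, _, .bot     => False
  | W, M, w, .and a b => Sat P W M w a ∧ Sat P W M w b
  | W, M, w, .or a b  => Sat P W M w a ∨ Sat P W M w b
  | W, M, w, .imp a b => Sat P W M w a → Sat P W M w b
  | W, M, _, .K φ     => ∀ v : W, Sat P W M v φ
  | W, M, w, .box φ   =>
      ∀ (s : Set W) (h : w ∈ s), Sat P s (M.restrict s ⟨w, h⟩) ⟨w, h⟩ φ
  | W, M, _, .kh α    => ∃ x : RS P α, ∀ v : W, x ∈ Res M v α

/-- A `DELKh`-formula is valid if it holds at every pointed model. -/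
def Valid {P : Type} (φ : DForm P) : Prop :=
  ∀ (W : Type) (M : Model P W) (w : W), Sat P W M w φ

/-- Semantic entailment from a set of `DELKh`-formulas. -/
def EntailsSet {P : Type} (Γ : Set (DForm P)) (φ : DForm P) : Prop :=
  ∀ (W : Type) (M : Model P W) (w : W),
    (∀ ψ ∈ Γ, Sat P W M w ψ) → Sat P W M w φ

/-- Classical satisfaction of `PL`-formulas at a pointed model. -/
def PLSat {P W : Type} (M : Model P W) (w : W) : PLForm P → Prop
  | .atom p  => p ∈ M.V w
  | .bot     => False
  | .and a b => PLSat M w a ∧ PLSat M w b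
  | .or a b  => PLSat M w a ∨ PLSat M w b
  | .imp a b => PLSat M w a → PLSat M w b

/-- Inquisitive support of `PL`-formulas at a state `s` of a model `M`. -/
def Support (P W : Type) (M : Model P W) : Set W → PLForm P → Prop
  | s, .atom p  => ∀ w ∈ s, p ∈ M.V w
  | s, .bot     => s = ∅
  | s, .and a b => Support P W M s a ∧ Support P W M s b
  | s, .or a b  => Support P W M s a ∨ Support P W M s b
  | s, .imp a b => ∀ t ⊆ s, Support P W M t a → Support P W M t b

/-- Inquisitive entailment: `Γ ⊩ α`. -/
def InqEntails {P : Type} (Γ : Set (PLForm P)) (α : PLForm P) : Prop :=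
  ∀ (W : Type) (M : Model P W) (s : Set W),
    (∀ γ ∈ Γ, Support P W M s γ) → Support P W M s α

/-! A state supports `α` exactly when its worlds share a resolution of `α`. Hence `Kh α` holds
in a model iff the whole model supports `α`, and, since `Kh` only looks at the worlds of the
model, `Kh γ` holds in the submodel on a nonempty state `s` iff `s` supports `γ`. The empty
state supports everything, so the two entailments coincide. -/

instance {P : Type} (α : PLForm P) : Nonempty (RS P α) := by
  induction α with
  | atom | bot => exact ⟨()⟩
  | and _ _ iha ihb => exact ⟨(iha.some, ihb.some)⟩
  | or _ _ iha _ => exact ⟨.inl iha.some⟩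
  | imp _ _ _ ihb => exact ⟨fun _ => ihb.some⟩

lemma res_eq_of_V_eq {P W W' : Type} {M : Model P W} {M' : Model P W'} {w : W} {w' : W'}
    (h : M.V w = M'.V w') (α : PLForm P) : Res M w α = Res M' w' α := by
  induction α with
  | atom => simp [Res, h]
  | bot => rfl
  | and _ _ iha ihb => rw [Res, Res, iha, ihb]
  | or _ _ iha ihb => simp only [Res, iha, ihb]
  | imp _ _ iha ihb => simp only [Res, iha, ihb]

lemma res_restrict {P W : Type} (M : Model P W) {s : Set W} (hs : s.Nonempty) (v : s)
    (α : PLForm P) : Res (M.restrict s hs) v α = Res M v α :=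
  res_eq_of_V_eq (M := M.restrict s hs) (M' := M) rfl α

lemma mem_res_or_inl_iff {P W : Type} {M : Model P W} {w : W} {a b : PLForm P} {x : RS P a} :
    (.inl x : RS P (a.or b)) ∈ Res M w (a.or b) ↔ x ∈ Res M w a := by
  show Sum.inl x ∈ Sum.inl '' _ ∪ Sum.inr '' _ ↔ _
  simp

lemma mem_res_or_inr_iff {P W : Type} {M : Model P W} {w : W} {a b : PLForm P} {y : RS P b} :
    (.inr y : RS P (a.or b)) ∈ Res M w (a.or b) ↔ y ∈ Res M w b := by
  show Sum.inr y ∈ Sum.inl '' _ ∪ Sum.inr '' _ ↔ _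
  simp

section Support

variable {P W : Type} (M : Model P W)

lemma support_iff_exists_res {α : PLForm P} {s : Set W} :
    Support P W M s α ↔ ∃ x : RS P α, ∀ w ∈ s, x ∈ Res M w α := by
  induction α generalizing s with
  | atom => exact ⟨fun h => ⟨(), h⟩, fun ⟨_, h⟩ => h⟩
  | bot => simp [Support, Res, Set.eq_empty_iff_forall_notMem]
  | and a b iha ihb =>
    simp only [Support, iha, ihb]
    constructor
    · rintro ⟨⟨x, hx⟩, y, hy⟩
      exact ⟨(x, y), fun w hw => ⟨hx w hw, hy w hw⟩⟩
    · rintro ⟨⟨x, y⟩, hxy⟩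
      exact ⟨⟨x, fun w hw => (hxy w hw).1⟩, y, fun w hw => (hxy w hw).2⟩
  | or a b iha ihb =>
    simp only [Support, iha, ihb]
    constructor
    · rintro (⟨x, hx⟩ | ⟨y, hy⟩)
      · exact ⟨.inl x, fun w hw => mem_res_or_inl_iff.2 (hx w hw)⟩
      · exact ⟨.inr y, fun w hw => mem_res_or_inr_iff.2 (hy w hw)⟩
    · rintro ⟨x | y, hxy⟩
      · exact .inl ⟨x, fun w hw => mem_res_or_inl_iff.1 (hxy w hw)⟩
      · exact .inr ⟨y, fun w hw => mem_res_or_inr_iff.1 (hxy w hw)⟩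
  | imp a b iha ihb =>
    simp only [Support, iha, ihb]
    constructor
    · intro h
      -- the worlds of `s` at which `x` resolves `a` form a substate supporting `a`
      have : ∀ x : RS P a, ∃ y : RS P b, ∀ w ∈ s, x ∈ Res M w a → y ∈ Res M w b := fun x =>
        let ⟨y, hy⟩ := h {w ∈ s | x ∈ Res M w a} (fun _ hw => hw.1) ⟨x, fun _ hw => hw.2⟩
        ⟨y, fun w hw hx => hy w ⟨hw, hx⟩⟩
      choose f hf using this
      exact ⟨f, fun w hw => Set.image_subset_iff.2 fun x hx => hf x w hw hx⟩
    · rintro ⟨f, hf⟩ t hts ⟨x, hx⟩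
      exact ⟨f x, fun w hw => hf w (hts hw) ⟨x, hx w hw, rfl⟩⟩

lemma support_empty (α : PLForm P) : Support P W M ∅ α :=
  (support_iff_exists_res M).2 ⟨Classical.arbitrary _, by simp⟩

lemma sat_kh_iff_support_univ {w : W} {α : PLForm P} :
    Sat P W M w (.kh α) ↔ Support P W M Set.univ α := by
  simp [Sat, support_iff_exists_res]

lemma support_iff_sat_kh_restrict {s : Set W} (hs : s.Nonempty) (v : s) {α : PLForm P} :
    Support P W M s α ↔ Sat P s (M.restrict s hs) v (.kh α) := by
  simp only [Sat, support_iff_exists_res, res_restrict, Subtype.forall]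

end Support

theorem inq_entails_iff_kh_entails_general {P : Type}
    (Γ : Set (PLForm P)) (α : PLForm P) :
    InqEntails Γ α ↔ EntailsSet (DForm.kh '' Γ) (.kh α) := by
  constructor
  · intro h W M w hΓ
    refine (sat_kh_iff_support_univ M).2 (h W M _ fun γ hγ => ?_)
    exact (sat_kh_iff_support_univ M).1 (hΓ _ (Set.mem_image_of_mem _ hγ))
  · intro h W M s hΓ
    rcases s.eq_empty_or_nonempty with rfl | hs
    · exact support_empty M α
    let v : s := ⟨hs.some, hs.some_mem⟩
    refine (support_iff_sat_kh_restrict M hs v).2 (h _ _ v ?_)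
    rintro _ ⟨γ, hγ, rfl⟩
    exact (support_iff_sat_kh_restrict M hs v).1 (hΓ γ hγ)

/-- main correspondence: `Γ ⊩ α` iff `Kh Γ ⊨ Kh α`. -/
theorem inq_entails_iff_kh_entails {P : Type} [Countable P]
    (Γ : Set (PLForm P)) (α : PLForm P) :
    InqEntails Γ α ↔ EntailsSet (DForm.kh '' Γ) (.kh α) :=
  inq_entails_iff_kh_entails_general Γ α
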